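/- arXiv:1502.04508 — 5 statements merged into one kernel-verified Lean document; each statement's English description precedes it below -/
import Mathlib

section
/- Let n ≥ 1, let T be an n-dimensional simplex in ℝ^n (the convex hull of n+1 affinely independent points), and let μ, ν be positive real numbers. Then vol(μT + ν·(−T)) = (∑_{i=0}^{n} C(n,i)² · μ^i · ν^{n−i}) · vol(T), where vol denotes Lebesgue measure on ℝ^n and μT + ν·(−T) = {μx − νy : x, y ∈ T} is the Minkowski sum. -/
/-!
Write `Q = {x ∈ ℝⁿ | x ≥ 0, ∑ xᵢ ≤ 1}` for the corner simplex. The affine map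
`x ↦ p 0 + ∑ xⱼ • (p (j + 1) - p 0)` sends `Q` onto `T`, and it carries `μQ + ν(-Q)` to a
translate of `μT + ν(-T)`; both volumes are therefore multiplied by the same factor `|det|`, and
it suffices to treat `T = Q`, where `vol Q = 1/n!`.

Now `μQ + ν(-Q)` consists of the `x - y` with `x ≥ 0, ∑ x ≤ μ` and `y ≥ 0, ∑ y ≤ ν`. Split it by
the set `S` of nonnegative coordinates: the piece belonging to `S` is the product of a corner
simplex of size `μ` in `ℝ^S` and a reflected one of size `ν` in `ℝ^Sᶜ`, of volume
`μ^k/k! · ν^(n-k)/(n-k)!` with `k = |S|`, and distinct pieces meet only inside coordinate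
hyperplanes. Summing over the `C(n,k)` sets of size `k` gives `∑ₖ C(n,k)² μ^k ν^(n-k) / n!`.
-/

open Pointwise MeasureTheory
open scoped Nat

section Minkowski
variable {R E F : Type*} [Ring R] [AddCommGroup E] [Module R E] [AddCommGroup F] [Module R F]

theorem smul_add_smul_neg_vadd (μ ν : R) (c : E) (A : Set E) :
    μ • (c +ᵥ A) + ν • -(c +ᵥ A) = (μ - ν) • c +ᵥ (μ • A + ν • -A) := by
  simp only [← Set.singleton_vadd, vadd_eq_add, smul_add, neg_add, Set.smul_set_singleton,
    Set.neg_singleton]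
  rw [add_add_add_comm, Set.singleton_add_singleton, smul_neg, ← sub_eq_add_neg, sub_smul]

theorem image_smul_add_smul_neg (f : E →ₗ[R] F) (μ ν : R) (A : Set E) :
    f '' (μ • A + ν • -A) = μ • f '' A + ν • -(f '' A) := by
  rw [Set.image_add, image_smul_set, image_smul_set, Set.image_neg]

end Minkowski

def cornerSimplex (ι : Type*) [Fintype ι] (t : ℝ) : Set (ι → ℝ) :=
  {x | 0 ≤ x ∧ ∑ i, x i ≤ t}

section CornerSimplex
variable {ι : Type*} [Fintype ι]

theorem isClosed_cornerSimplex (t : ℝ) : IsClosed (cornerSimplex ι t) :=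
  (isClosed_le continuous_const continuous_id).inter
    (isClosed_le (continuous_finsetSum _ fun i _ => continuous_apply i) continuous_const)

theorem convex_cornerSimplex (t : ℝ) : Convex ℝ (cornerSimplex ι t) :=
  (convex_Ici 0).inter <| convex_halfSpace_le
    ⟨fun _ _ => Finset.sum_add_distrib, fun _ _ => (Finset.mul_sum ..).symm⟩ t

theorem cornerSimplex_eq_empty {t : ℝ} (ht : t < 0) : cornerSimplex ι t = ∅ :=
  Set.eq_empty_of_forall_notMem fun _ hx =>
    (Finset.sum_nonneg fun i _ => hx.1 i).not_gt (hx.2.trans_lt ht)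

theorem smul_cornerSimplex {t : ℝ} (ht : 0 < t) (s : ℝ) :
    t • cornerSimplex ι s = cornerSimplex ι (t * s) := by
  ext x
  simp only [Set.mem_smul_set_iff_inv_smul_mem₀ ht.ne', cornerSimplex, Set.mem_ofPred_eq,
    Pi.smul_apply, smul_eq_mul, ← Finset.mul_sum]
  exact and_congr (smul_nonneg_iff_nonneg_of_pos_left (inv_pos.2 ht)) (inv_mul_le_iff₀ ht)

theorem integral_sub_pow_div_factorial (m : ℕ) (t : ℝ) :
    ∫ a in (0 : ℝ)..t, (t - a) ^ m / m ! = t ^ (m + 1) / (m + 1)! := by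
  rw [intervalIntegral.integral_div, intervalIntegral.integral_comp_sub_left (· ^ m),
    sub_self, sub_zero, integral_pow, Nat.factorial_succ]
  push_cast
  field_simp
  ring

theorem volume_cornerSimplex_fin (m : ℕ) {t : ℝ} (ht : 0 ≤ t) :
    volume (cornerSimplex (Fin m) t) = ENNReal.ofReal (t ^ m / m !) := by
  induction m generalizing t with
  | zero => simp [cornerSimplex, ht, volume_pi]
  | succ m ih =>
    set A : Set (ℝ × (Fin m → ℝ)) :=
      {q | 0 ≤ q.1 ∧ q.2 ∈ cornerSimplex (Fin m) (t - q.1)}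
    have hA : MeasurableSet A :=
      ((isClosed_le continuous_const continuous_fst).inter
        ((isClosed_le continuous_const continuous_snd).inter
          (isClosed_le (continuous_finsetSum _ fun i _ => (continuous_apply i).comp continuous_snd)
            (continuous_const.sub continuous_fst)))).measurableSet
    have hpre : cornerSimplex (Fin (m + 1)) t =
        MeasurableEquiv.piFinSuccAbove (fun _ => ℝ) 0 ⁻¹' A := by
      ext x
      simp only [cornerSimplex, A, Set.mem_ofPred_eq, Set.mem_preimage,
        MeasurableEquiv.piFinSuccAbove_apply, Pi.le_def, Pi.zero_apply, Fin.sum_univ_succ,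
        Fin.forall_fin_succ, le_sub_iff_add_le']
      tauto
    have hslice (a : ℝ) : volume (Prod.mk a ⁻¹' A) =
        (Set.Icc 0 t).indicator (fun a => ENNReal.ofReal ((t - a) ^ m / m !)) a := by
      by_cases ha : 0 ≤ a
      · by_cases hat : a ≤ t
        · simp [A, ha, hat, ih (sub_nonneg.2 hat)]
        · simp [A, ha, hat, cornerSimplex_eq_empty (sub_neg.2 (not_le.1 hat))]
      · simp [A, ha]
    rw [hpre, (volume_preserving_piFinSuccAbove (fun _ => ℝ) 0).measure_preimage
      hA.nullMeasurableSet, Measure.volume_eq_prod, Measure.prod_apply hA]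
    simp only [hslice, lintegral_indicator measurableSet_Icc]
    rw [← ofReal_integral_eq_lintegral_ofReal, MeasureTheory.integral_Icc_eq_integral_Ioc,
      ← intervalIntegral.integral_of_le ht, integral_sub_pow_div_factorial]
    · exact (((continuous_const.sub continuous_id).pow m).div_const _).integrableOn_Icc
    · filter_upwards [ae_restrict_mem measurableSet_Icc] with a ha
      have := sub_nonneg.2 ha.2
      positivity

theorem volume_cornerSimplex {t : ℝ} (ht : 0 ≤ t) :
    volume (cornerSimplex ι t) = ENNReal.ofReal (t ^ Fintype.card ι / (Fintype.card ι)!) := by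
  let e := Fintype.equivFin ι
  have hpre : MeasurableEquiv.piCongrLeft (fun _ => ℝ) e.symm ⁻¹' cornerSimplex ι t =
      cornerSimplex (Fin (Fintype.card ι)) t := by
    ext y
    simp only [cornerSimplex, Set.mem_preimage, Set.mem_ofPred_eq, Pi.le_def, Pi.zero_apply,
      MeasurableEquiv.coe_piCongrLeft]
    rw [← e.symm.forall_congr_right, ← e.symm.sum_comp]
    simp
  rw [← (volume_measurePreserving_piCongrLeft (fun _ => ℝ) e.symm).measure_preimage_equiv, hpre,
    volume_cornerSimplex_fin _ ht]

end CornerSimplex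

theorem sum_finset_pow_card_div_factorial (ι : Type*) [Fintype ι] (μ ν : ℝ) :
    ∑ S : Finset ι, μ ^ S.card / S.card ! *
        (ν ^ (Fintype.card ι - S.card) / (Fintype.card ι - S.card)!) =
      (∑ k ∈ Finset.range (Fintype.card ι + 1),
        ((Fintype.card ι).choose k : ℝ) ^ 2 * μ ^ k * ν ^ (Fintype.card ι - k)) /
        (Fintype.card ι)! := by
  rw [← Finset.powerset_univ, Finset.sum_powerset_apply_card
    (fun k => μ ^ k / k ! * (ν ^ (Fintype.card ι - k) / (Fintype.card ι - k)!)),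
    Finset.card_univ, Finset.sum_div]
  refine Finset.sum_congr rfl fun k hk => ?_
  have hk : k ≤ Fintype.card ι := Nat.lt_succ_iff.1 (Finset.mem_range.1 hk)
  rw [nsmul_eq_mul, sq, Nat.cast_choose ℝ hk]
  field_simp

section OrthantPiece
variable {ι : Type*} [Fintype ι] [DecidableEq ι]

def orthantPiece (S : Finset ι) (μ ν : ℝ) : Set (ι → ℝ) :=
  {z | (∀ i ∈ S, 0 ≤ z i) ∧ (∀ i ∉ S, z i ≤ 0) ∧ ∑ i ∈ S, z i ≤ μ ∧ ∑ i ∈ Sᶜ, -z i ≤ ν}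

theorem orthantPiece_eq_preimage (S : Finset ι) (μ ν : ℝ) :
    orthantPiece S μ ν =
      MeasurableEquiv.piEquivPiSubtypeProd (fun _ : ι => ℝ) (· ∈ S) ⁻¹'
        (cornerSimplex {i // i ∈ S} μ ×ˢ (-cornerSimplex {i // i ∉ S} ν)) := by
  ext z
  simp only [orthantPiece, cornerSimplex, Set.mem_preimage, Set.mem_prod, Set.mem_neg,
    Set.mem_ofPred_eq, MeasurableEquiv.piEquivPiSubtypeProd_apply, Pi.le_def, Pi.zero_apply,
    Pi.neg_apply, Subtype.forall, neg_nonneg, Finset.sum_coe_sort,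
    ← Finset.sum_subtype Sᶜ (fun _ => Finset.mem_compl) (fun i => -z i)]
  tauto

theorem measurableSet_orthantPiece (S : Finset ι) (μ ν : ℝ) :
    MeasurableSet (orthantPiece S μ ν) := by
  rw [orthantPiece_eq_preimage]
  exact ((isClosed_cornerSimplex μ).measurableSet.prod
    (isClosed_cornerSimplex ν).measurableSet.neg).preimage (MeasurableEquiv.measurable _)

theorem volume_orthantPiece (S : Finset ι) {μ ν : ℝ} (hμ : 0 ≤ μ) (hν : 0 ≤ ν) :
    volume (orthantPiece S μ ν) = ENNReal.ofReal (μ ^ S.card / S.card ! *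
      (ν ^ (Fintype.card ι - S.card) / (Fintype.card ι - S.card)!)) := by
  rw [orthantPiece_eq_preimage,
    (volume_preserving_piEquivPiSubtypeProd _ _).measure_preimage_equiv,
    Measure.volume_eq_prod, Measure.prod_prod, Measure.measure_neg, volume_cornerSimplex hν,
    Fintype.card_subtype_compl, Fintype.card_coe, ENNReal.ofReal_mul (by positivity)]
  congr 1
  -- `cornerSimplex ↥S` and the volume on `↥S → ℝ` use different `Fintype ↥S` instances
  convert volume_cornerSimplex hμ <;> rw [Fintype.card_coe]

theorem aedisjoint_orthantPiece {S S' : Finset ι} (h : S ≠ S') (μ ν : ℝ) :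
    AEDisjoint volume (orthantPiece S μ ν) (orthantPiece S' μ ν) := by
  obtain ⟨i, hi⟩ : ∃ i, ¬(i ∈ S ↔ i ∈ S') := by simpa [Finset.ext_iff] using h
  have hnull : volume {z : ι → ℝ | z i = 0} = 0 :=
    Measure.pi_eval_preimage_null (fun _ : ι => (volume : Measure ℝ)) Real.volume_singleton
  refine measure_mono_null (fun z ⟨hz, hz'⟩ => ?_) hnull
  by_cases hS : i ∈ S
  · exact le_antisymm (hz'.2.1 i (by tauto)) (hz.1 i hS)
  · exact le_antisymm (hz.2.1 i hS) (hz'.1 i (by tauto))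

theorem cornerSimplex_add_neg_cornerSimplex (μ ν : ℝ) :
    cornerSimplex ι μ + -cornerSimplex ι ν = ⋃ S : Finset ι, orthantPiece S μ ν := by
  ext z
  simp only [Set.mem_iUnion]
  constructor
  · rintro ⟨x, ⟨hx, hxμ⟩, y, ⟨hy, hyν⟩, rfl⟩
    have hy : ∀ i, y i ≤ 0 := fun i => neg_nonneg.1 (hy i)
    let S : Finset ι := {i | 0 ≤ (x + y) i}
    refine ⟨S, fun i hi => by simpa [S] using hi,
      fun i hi => by simpa [S] using (not_le.1 (by simpa [S] using hi)).le, ?_, ?_⟩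
    · calc ∑ i ∈ S, (x + y) i ≤ ∑ i ∈ S, x i :=
            Finset.sum_le_sum fun i _ => add_le_of_nonpos_right (hy i)
        _ ≤ ∑ i, x i := Finset.sum_le_univ_sum_of_nonneg hx
        _ ≤ μ := hxμ
    · calc ∑ i ∈ Sᶜ, -(x + y) i ≤ ∑ i ∈ Sᶜ, -y i :=
            Finset.sum_le_sum fun i _ => by simpa using hx i
        _ ≤ ∑ i, -y i := Finset.sum_le_univ_sum_of_nonneg fun i => neg_nonneg.2 (hy i)
        _ ≤ ν := by simpa using hyν
  · rintro ⟨S, hzS, hzSc, hzμ, hzν⟩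
    refine ⟨fun i => if i ∈ S then z i else 0, ⟨fun i => ?_, ?_⟩,
      -fun i => if i ∈ Sᶜ then -z i else 0, ⟨fun i => ?_, ?_⟩, ?_⟩
    · by_cases hi : i ∈ S <;> simp [hi, hzS]
    · rwa [Finset.sum_ite_mem, Finset.univ_inter]
    · by_cases hi : i ∈ S <;> simp [hi, hzSc]
    · rwa [neg_neg, Finset.sum_ite_mem, Finset.univ_inter]
    · ext i
      by_cases hi : i ∈ S <;> simp [hi]

theorem volume_cornerSimplex_add_neg_cornerSimplex {μ ν : ℝ} (hμ : 0 ≤ μ) (hν : 0 ≤ ν) :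
    volume (cornerSimplex ι μ + -cornerSimplex ι ν) =
      ENNReal.ofReal ((∑ k ∈ Finset.range (Fintype.card ι + 1),
        ((Fintype.card ι).choose k : ℝ) ^ 2 * μ ^ k * ν ^ (Fintype.card ι - k)) /
        (Fintype.card ι)!) := by
  rw [cornerSimplex_add_neg_cornerSimplex, measure_iUnion₀
      (fun S S' h => aedisjoint_orthantPiece h μ ν)
      (fun S => (measurableSet_orthantPiece S μ ν).nullMeasurableSet),
    tsum_fintype, ← sum_finset_pow_card_div_factorial,
    ENNReal.ofReal_sum_of_nonneg (fun S _ => by positivity)]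
  exact Finset.sum_congr rfl fun S _ => volume_orthantPiece S hμ hν

end OrthantPiece

theorem convexHull_range_eq_vadd_image_cornerSimplex {E : Type*} [AddCommGroup E] [Module ℝ E]
    {n : ℕ} (p : Fin (n + 1) → E) :
    convexHull ℝ (Set.range p) =
      p 0 +ᵥ Fintype.linearCombination ℝ (fun j : Fin n => p j.succ - p 0) ''
        cornerSimplex (Fin n) 1 := by
  set M := Fintype.linearCombination ℝ (fun j : Fin n => p j.succ - p 0)
  apply subset_antisymm
  · refine convexHull_min ?_ (((convex_cornerSimplex 1).linear_image M).vadd (p 0))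
    rintro _ ⟨i, rfl⟩
    refine Set.mem_vadd_set.2 ?_
    cases i using Fin.cases with
    | zero => exact ⟨0, ⟨0, ⟨le_rfl, by simp⟩, map_zero M⟩, by simp⟩
    | succ j =>
      refine ⟨M (Pi.single j 1), ⟨Pi.single j 1, ⟨Pi.single_nonneg.2 zero_le_one, ?_⟩, rfl⟩, ?_⟩
      · simp
      · simp [M]
  · rintro _ ⟨_, ⟨y, ⟨hy0, hy1⟩, rfl⟩, rfl⟩
    let w : Fin (n + 1) → ℝ := Fin.cons (1 - ∑ j, y j) y
    have hw : p 0 +ᵥ M y = ∑ i, w i • p i := by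
      simp [M, w, Fin.sum_univ_succ, Fintype.linearCombination_apply, smul_sub,
        Finset.sum_sub_distrib, ← Finset.sum_smul, sub_smul]
      abel
    change p 0 +ᵥ M y ∈ _
    rw [hw]
    refine (convex_convexHull ℝ _).sum_mem (fun i _ => ?_) ?_
      fun i _ => subset_convexHull ℝ _ ⟨i, rfl⟩
    · cases i using Fin.cases with
      | zero => simpa [w] using hy1
      | succ j => simpa [w] using hy0 j
    · simp [w, Fin.sum_univ_succ]

theorem volume_image_linearMap_of_pi {ι : Type*} [Fintype ι]
    (M : (ι → ℝ) →ₗ[ℝ] EuclideanSpace ℝ ι) (X : Set (ι → ℝ)) :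
    volume (M '' X) =
      ENNReal.ofReal |(M ∘ₗ (WithLp.linearEquiv 2 ℝ (ι → ℝ)).toLinearMap).det| * volume X := by
  set L := M ∘ₗ (WithLp.linearEquiv 2 ℝ (ι → ℝ)).toLinearMap
  have hML : M '' X = L '' ((MeasurableEquiv.toLp 2 (ι → ℝ)).symm ⁻¹' X) := by
    rw [LinearMap.coe_comp, Set.image_comp]
    exact congrArg _ (Set.image_preimage_eq X (MeasurableEquiv.surjective _)).symm
  rw [hML, Measure.addHaar_image_linearMap,
    (EuclideanSpace.volume_preserving_symm_measurableEquiv_toLp ι).measure_preimage_equiv]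

theorem vol_smul_add_smul_neg_simplex_general (n : ℕ)
    (p : Fin (n + 1) → EuclideanSpace ℝ (Fin n))
    (T : Set (EuclideanSpace ℝ (Fin n))) (hT : T = convexHull ℝ (Set.range p))
    (μ ν : ℝ) (hμ : 0 < μ) (hν : 0 < ν) :
    volume (μ • T + ν • (-T)) =
      ENNReal.ofReal (∑ i ∈ Finset.range (n + 1),
        (n.choose i : ℝ) ^ 2 * μ ^ i * ν ^ (n - i)) * volume T := by
  set M := Fintype.linearCombination ℝ (fun j : Fin n => p j.succ - p 0)
  set Q := cornerSimplex (Fin n) 1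
  set d := |(M ∘ₗ (WithLp.linearEquiv 2 ℝ (Fin n → ℝ)).toLinearMap).det|
  set K := ∑ i ∈ Finset.range (n + 1), (n.choose i : ℝ) ^ 2 * μ ^ i * ν ^ (n - i)
  have hK : 0 ≤ K := by positivity
  rw [hT, convexHull_range_eq_vadd_image_cornerSimplex]
  calc volume (μ • (p 0 +ᵥ M '' Q) + ν • -(p 0 +ᵥ M '' Q))
      = volume (M '' (cornerSimplex (Fin n) μ + -cornerSimplex (Fin n) ν)) := by
        rw [smul_add_smul_neg_vadd, measure_vadd, ← image_smul_add_smul_neg, Set.smul_set_neg,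
          smul_cornerSimplex hμ, smul_cornerSimplex hν, mul_one, mul_one]
    _ = ENNReal.ofReal d * ENNReal.ofReal (K / n !) := by
        rw [volume_image_linearMap_of_pi, volume_cornerSimplex_add_neg_cornerSimplex hμ.le hν.le,
          Fintype.card_fin]
    _ = ENNReal.ofReal K * (ENNReal.ofReal d * ENNReal.ofReal (1 / n !)) := by
        rw [← ENNReal.ofReal_mul (abs_nonneg _), ← ENNReal.ofReal_mul (abs_nonneg _),
          ← ENNReal.ofReal_mul hK]
        congr 1
        ring
    _ = ENNReal.ofReal K * volume (p 0 +ᵥ M '' Q) := by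
        rw [measure_vadd, volume_image_linearMap_of_pi, volume_cornerSimplex zero_le_one,
          Fintype.card_fin, one_pow]

/-- For an `n`-dimensional simplex `T` in `ℝ^n` and positive reals `μ, ν`,
`vol(μT + ν(−T)) = (∑_{i=0}^{n} C(n,i)² μ^i ν^{n−i}) · vol(T)`. -/
theorem vol_smul_add_smul_neg_simplex (n : ℕ) (hn : 1 ≤ n)
    (p : Fin (n + 1) → EuclideanSpace ℝ (Fin n)) (hp : AffineIndependent ℝ p)
    (T : Set (EuclideanSpace ℝ (Fin n))) (hT : T = convexHull ℝ (Set.range p))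
    (μ ν : ℝ) (hμ : 0 < μ) (hν : 0 < ν) :
    volume (μ • T + ν • (-T)) =
      ENNReal.ofReal (∑ i ∈ Finset.range (n + 1),
        (n.choose i : ℝ) ^ 2 * μ ^ i * ν ^ (n - i)) * volume T :=
  vol_smul_add_smul_neg_simplex_general n p T hT μ ν hμ hν
end

section
/- Let K be a convex body in ℝ^n (a compact convex set with nonempty interior) and let Λ be a full-rank lattice in ℝ^n such that K + Λ = ℝ^n. For each positive integer j, let K^j = {x ∈ K : the number of u ∈ Λ with x ∈ K + u equals j}. Then ∑_{j≥1} (1/j)·vol(K^j) = det(Λ); equivalently, the covering density satisfies vol(K)/det(Λ) = vol(K)/(vol(K) − ∑_{j≥1} ((j−1)/j)·vol(K^j)). -/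
open Pointwise MeasureTheory ENNReal

/-!
Let `m x` count the lattice translates of `K` that contain `x`. Unfolding `K` over a fundamental
domain `D` of `Λ` gives `vol (K ∩ L) = ∫_{D ∩ L} m` for every `Λ`-invariant measurable set `L`.
Since `m` is itself `Λ`-invariant, taking for `L` its level set `{m = j}` yields
`vol K^j = j · vol (D ∩ {m = j})`. Compactness of `K` and `K + Λ = ℝⁿ` make `m` finite and positive,
so these level sets partition `D`, and `∑ vol K^j / j = vol D = det Λ`.
-/

open Set

noncomputable def coveringMultiplicity (G : Type*) {α : Type*} [VAdd G α] (K : Set α) (x : α) :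
    ℝ≥0∞ :=
  {g : G | x ∈ g +ᵥ K}.encard

section CoveringMultiplicity

variable {G α : Type*}

theorem tsum_indicator_vadd_eq_coveringMultiplicity [VAdd G α] (K : Set α) (x : α) :
    ∑' g : G, (g +ᵥ K).indicator 1 x = coveringMultiplicity G K x := by
  rw [coveringMultiplicity, ← ENNReal.tsum_set_one]
  exact (tsum_subtype _ 1).symm

variable [AddGroup G] [AddAction G α]

theorem Set.indicator_vadd_set_one_apply {M : Type*} [One M] [Zero M] (g : G) (K : Set α)
    (x : α) : (g +ᵥ K).indicator (1 : α → M) x = K.indicator 1 (-g +ᵥ x) := by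
  by_cases h : -g +ᵥ x ∈ K
  · rw [indicator_of_mem h, indicator_of_mem (mem_vadd_set_iff_neg_vadd_mem.2 h)]; rfl
  · rw [indicator_of_notMem h, indicator_of_notMem (mt mem_vadd_set_iff_neg_vadd_mem.1 h)]

theorem coveringMultiplicity_vadd (K : Set α) (h : G) (x : α) :
    coveringMultiplicity G K (h +ᵥ x) = coveringMultiplicity G K x := by
  have : {g : G | h +ᵥ x ∈ g +ᵥ K} = (-h + ·) ⁻¹' {g | x ∈ g +ᵥ K} := by
    ext g
    simp [mem_vadd_set_iff_neg_vadd_mem, vadd_vadd]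
  rw [coveringMultiplicity, coveringMultiplicity, this,
    encard_preimage_of_bijective (AddGroup.addLeft_bijective _)]

theorem exists_coveringMultiplicity_eq_succ {K : Set α} {x : α}
    (hfin : {g : G | x ∈ g +ᵥ K}.Finite) (hcov : ∃ g : G, x ∈ g +ᵥ K) :
    ∃ j : ℕ, coveringMultiplicity G K x = j + 1 := by
  have hpos : 0 < {g : G | x ∈ g +ᵥ K}.ncard := (ncard_pos hfin).2 hcov
  refine ⟨{g : G | x ∈ g +ᵥ K}.ncard - 1, ?_⟩
  rw [coveringMultiplicity, ← hfin.cast_ncard_eq]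
  norm_cast
  omega

variable [MeasurableSpace α] [Countable G] [MeasurableConstVAdd G α]

theorem measurable_coveringMultiplicity {K : Set α} (hK : MeasurableSet K) :
    Measurable (coveringMultiplicity G K) := by
  rw [← funext (tsum_indicator_vadd_eq_coveringMultiplicity (G := G) K)]
  exact .tsum fun g => measurable_one.indicator (hK.const_vadd g)

namespace MeasureTheory.IsAddFundamentalDomain

variable {μ : Measure α} [VAddInvariantMeasure G α μ] {D K : Set α}

theorem measure_inter_coveringMultiplicity_eq (hD : IsAddFundamentalDomain G D μ)
    (hK : MeasurableSet K) (c : ℝ≥0∞) :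
    μ (K ∩ {x | coveringMultiplicity G K x = c}) =
      c * μ ({x | coveringMultiplicity G K x = c} ∩ D) := by
  set L := {x | coveringMultiplicity G K x = c}
  have hL : MeasurableSet L := measurable_coveringMultiplicity hK (measurableSet_singleton c)
  have hLinv (g : G) (x : α) : g +ᵥ x ∈ L ↔ x ∈ L := by
    simp only [L, mem_ofPred_eq, coveringMultiplicity_vadd]
  calc μ (K ∩ L)
      = ∑' g : G, ∫⁻ x in D, (K ∩ L).indicator 1 (-g +ᵥ x) ∂μ := by
        rw [← hD.lintegral_eq_tsum', lintegral_indicator_one (hK.inter hL)]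
    _ = ∑' g : G, ∫⁻ x in L, (g +ᵥ K).indicator 1 x ∂μ.restrict D := by
        refine tsum_congr fun g => ?_
        rw [← lintegral_indicator hL]
        congr 1 with x
        rw [inter_indicator_one, Pi.mul_apply]
        by_cases hx : x ∈ L
        · rw [indicator_of_mem hx, indicator_of_mem ((hLinv _ _).2 hx), Pi.one_apply, mul_one,
            indicator_vadd_set_one_apply]
        · rw [indicator_of_notMem hx, indicator_of_notMem (mt (hLinv _ _).1 hx), mul_zero]
    _ = ∫⁻ x in L, coveringMultiplicity G K x ∂μ.restrict D := by
        rw [← lintegral_tsum fun g => (measurable_one.indicator (hK.const_vadd g)).aemeasurable]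
        simp_rw [tsum_indicator_vadd_eq_coveringMultiplicity]
    _ = c * μ (L ∩ D) := by
        rw [setLIntegral_congr_fun hL
          (fun x (hx : x ∈ L) => (hx : coveringMultiplicity G K x = c)), setLIntegral_const,
          Measure.restrict_apply hL]

theorem tsum_measure_inter_coveringMultiplicity_div (hD : IsAddFundamentalDomain G D μ)
    (hK : MeasurableSet K) (hfin : ∀ x, {g : G | x ∈ g +ᵥ K}.Finite)
    (hcov : ∀ x, ∃ g : G, x ∈ g +ᵥ K) :
    ∑' j : ℕ, μ (K ∩ {x | coveringMultiplicity G K x = j + 1}) / (j + 1) = μ D := by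
  set L : ℕ → Set α := fun j => {x | coveringMultiplicity G K x = j + 1}
  have hL (j : ℕ) : MeasurableSet (L j) :=
    measurable_coveringMultiplicity hK (measurableSet_singleton _)
  have hunion : ⋃ j, L j = univ := eq_univ_of_forall fun x =>
    mem_iUnion.2 (exists_coveringMultiplicity_eq_succ (hfin x) (hcov x))
  have hdisj : Pairwise (Function.onFun Disjoint L) := fun i j hij =>
    disjoint_left.2 fun x hi hj => hij (by simpa [L] using hi.symm.trans hj)
  calc ∑' j : ℕ, μ (K ∩ L j) / (j + 1)
      = ∑' j : ℕ, μ (L j ∩ D) := tsum_congr fun j => by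
        rw [hD.measure_inter_coveringMultiplicity_eq hK, mul_comm,
          ENNReal.mul_div_cancel_right (by simp) (by simp)]
    _ = μ D := by
        rw [← measure_iUnion₀ (fun i j hij => ((hdisj hij).mono inter_subset_left
            inter_subset_left).aedisjoint) fun j => (hL j).nullMeasurableSet.inter
            hD.nullMeasurableSet, ← iUnion_inter, hunion, univ_inter]

end MeasureTheory.IsAddFundamentalDomain

end CoveringMultiplicity

theorem AddSubgroup.mem_vadd_set_iff_sub_mem {E : Type*} [AddCommGroup E] {H : AddSubgroup E}
    (g : H) (K : Set E) (x : E) : x ∈ g +ᵥ K ↔ x - g ∈ K := by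
  rw [mem_vadd_set_iff_neg_vadd_mem, AddSubgroup.vadd_def, vadd_eq_add, AddSubgroup.coe_neg,
    neg_add_eq_sub]

theorem AddSubgroup.coveringMultiplicity_eq_ncard {E : Type*} [AddCommGroup E]
    (H : AddSubgroup E) (K : Set E) {x : E} (hfin : {g : H | x ∈ g +ᵥ K}.Finite) :
    coveringMultiplicity H K x = {u | u ∈ H ∧ x - u ∈ K}.ncard := by
  have : {u | u ∈ H ∧ x - u ∈ K} = Subtype.val '' {g : H | x ∈ g +ᵥ K} := by
    ext u
    simp [mem_vadd_set_iff_sub_mem, and_comm]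
  rw [this, ncard_image_of_injective _ Subtype.val_injective, coveringMultiplicity,
    ← hfin.cast_ncard_eq, ENat.toENNReal_coe]

namespace ZSpan

variable {ι E : Type*}

theorem setFinite_mem_vadd [NormedAddCommGroup E] [NormedSpace ℝ E] [ProperSpace E] [Finite ι]
    (b : Module.Basis ι ℝ E) {K : Set E} (hK : Bornology.IsBounded K) (x : E) :
    {g : (Submodule.span ℤ (range b)).toAddSubgroup | x ∈ g +ᵥ K}.Finite := by
  refine Finite.of_finite_image ((setFinite_inter b (hK.neg.vadd x)).subset ?_)
    Subtype.val_injective.injOn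
  rintro _ ⟨g, hg, rfl⟩
  refine ⟨?_, g.2⟩
  rw [mem_vadd_set_iff_neg_vadd_mem, mem_neg]
  simpa [AddSubgroup.mem_vadd_set_iff_sub_mem, neg_add_eq_sub] using hg

theorem volume_fundamentalDomain_euclideanSpace [Fintype ι] [DecidableEq ι]
    (b : Module.Basis ι ℝ (EuclideanSpace ℝ ι)) :
    volume (fundamentalDomain b) = ENNReal.ofReal |(Matrix.of fun i j => b i j).det| := by
  let b₀ := EuclideanSpace.basisFun ι ℝ
  rw [measure_fundamentalDomain b volume b₀.toBasis,
    measure_congr (fundamentalDomain_ae_parallelepiped b₀.toBasis volume),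
    OrthonormalBasis.coe_toBasis, b₀.volume_parallelepiped, mul_one, Module.Basis.det_apply,
    ← Matrix.det_transpose]
  rfl

end ZSpan

theorem lattice_covering_layer_decomposition_general (n : ℕ)
    (K : Set (EuclideanSpace ℝ (Fin n)))
    (hKcpt : IsCompact K)
    (b : Module.Basis (Fin n) ℝ (EuclideanSpace ℝ (Fin n)))
    (hcov : K + (↑(Submodule.span ℤ (Set.range b)) : Set (EuclideanSpace ℝ (Fin n)))
      = Set.univ)
    (Kj : ℕ → Set (EuclideanSpace ℝ (Fin n)))
    (hKj : ∀ j, Kj j =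
      {x ∈ K | {u | u ∈ Submodule.span ℤ (Set.range b) ∧ x - u ∈ K}.ncard = j}) :
    ∑' j : ℕ, volume (Kj (j + 1)) / (j + 1 : ℝ≥0∞) =
      ENNReal.ofReal |(Matrix.of fun i j => b i j).det| := by
  set Λ := (Submodule.span ℤ (Set.range b)).toAddSubgroup
  have : Countable Λ := inferInstanceAs (Countable (Submodule.span ℤ (Set.range b)))
  have hfin (x) : {g : Λ | x ∈ g +ᵥ K}.Finite :=
    ZSpan.setFinite_mem_vadd b hKcpt.isBounded x
  have hcover (x) : ∃ g : Λ, x ∈ g +ᵥ K := by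
    obtain ⟨k, hk, u, hu, rfl⟩ := mem_add.1 (hcov ▸ mem_univ x)
    exact ⟨⟨u, hu⟩, (AddSubgroup.mem_vadd_set_iff_sub_mem _ _ _).2 (by simpa using hk)⟩
  have hlayer (j : ℕ) : Kj (j + 1) = K ∩ {x | coveringMultiplicity Λ K x = j + 1} := by
    ext x
    simp only [hKj, mem_inter_iff, mem_ofPred_eq, Λ.coveringMultiplicity_eq_ncard K (hfin x)]
    norm_cast
  simp_rw [hlayer]
  rw [(ZSpan.isAddFundamentalDomain' b volume).tsum_measure_inter_coveringMultiplicity_div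
    hKcpt.isClosed.measurableSet hfin hcover, ZSpan.volume_fundamentalDomain_euclideanSpace]

/-- For a lattice covering `K + Λ = ℝ^n` by a convex body `K`, letting `K^j` be the set of
points of `K` covered by exactly `j` lattice translates of `K`, we have
`∑_{j≥1} (1/j)·vol(K^j) = det(Λ)`. -/
theorem lattice_covering_layer_decomposition (n : ℕ)
    (K : Set (EuclideanSpace ℝ (Fin n)))
    (hKcpt : IsCompact K) (hKconv : Convex ℝ K) (hKint : (interior K).Nonempty)
    (b : Module.Basis (Fin n) ℝ (EuclideanSpace ℝ (Fin n)))
    (hcov : K + (↑(Submodule.span ℤ (Set.range b)) : Set (EuclideanSpace ℝ (Fin n)))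
      = Set.univ)
    (Kj : ℕ → Set (EuclideanSpace ℝ (Fin n)))
    (hKj : ∀ j, Kj j =
      {x ∈ K | {u | u ∈ Submodule.span ℤ (Set.range b) ∧ x - u ∈ K}.ncard = j}) :
    ∑' j : ℕ, volume (Kj (j + 1)) / (j + 1 : ℝ≥0∞) =
      ENNReal.ofReal |(Matrix.of fun i j => b i j).det| :=
  lattice_covering_layer_decomposition_general n K hKcpt b hcov Kj hKj
end

section
/- Let n ≥ 1 and let Δ = {x ∈ ℝ^n : x_i ≥ 0 for all i, ∑_i x_i ≤ 1} be the standard simplex. For each subset S ⊆ {1,…,n}, let F_S be the convex hull of {0} ∪ {e_i : i ∈ S}, where e_1,…,e_n is the standard basis. Then for all positive reals μ, ν: μΔ + ν·(−Δ) = ⋃_{S ⊆ {1,…,n}} (μ F_S + ν·(−F_{S^c})), where S^c denotes the complement of S. -/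
/-!
Every face `F_S` is the part of `Δ` supported on `S`. Given `y = μ a - ν b` with `a, b ∈ Δ`, let
`S = {i | 0 < y i}`. Since `b ≥ 0` we have `y⁺ ≤ μ a`, and since `a ≥ 0` we have `y⁻ ≤ ν b`; hence
`y⁺ / μ ∈ F_S`, `y⁻ / ν ∈ F_{Sᶜ}` and `y = μ (y⁺ / μ) - ν (y⁻ / ν)`. The reverse inclusion is
`F_S ⊆ Δ`.
-/

open Pointwise

theorem Convex.sum_mem_of_sum_le_one {𝕜 E ι : Type*} [Field 𝕜] [LinearOrder 𝕜]
    [IsStrictOrderedRing 𝕜] [AddCommGroup E] [Module 𝕜 E] {s : Set E} {t : Finset ι}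
    {w : ι → 𝕜} {z : ι → E} (hs : Convex 𝕜 s) (h0 : 0 ∈ s) (hw₀ : ∀ i ∈ t, 0 ≤ w i)
    (hw₁ : ∑ i ∈ t, w i ≤ 1) (hz : ∀ i ∈ t, z i ∈ s) : ∑ i ∈ t, w i • z i ∈ s := by
  -- the point `0 ∈ s` takes up the missing weight `1 - ∑ i ∈ t, w i`
  simpa using hs.sum_mem (t := t.insertNone) (w := fun o ↦ o.elim (1 - ∑ i ∈ t, w i) w)
    (z := fun o ↦ o.elim 0 z) (by rintro (_ | i) hi <;> simp_all) (by simp)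
    (by rintro (_ | i) hi <;> simp_all)

variable {ι : Type*} [Fintype ι]

variable (ι) in
def solidSimplex : Set (EuclideanSpace ℝ ι) := {x | (∀ i, 0 ≤ x i) ∧ ∑ i, x i ≤ 1}

def solidSimplexFace (S : Finset ι) : Set (EuclideanSpace ℝ ι) :=
  {x ∈ solidSimplex ι | ∀ i ∉ S, x i = 0}

theorem solidSimplexFace_subset (S : Finset ι) : solidSimplexFace S ⊆ solidSimplex ι :=
  Set.sep_subset _ _

theorem convex_solidSimplexFace (S : Finset ι) : Convex ℝ (solidSimplexFace S) := by
  rintro x ⟨⟨hx₀, hx₁⟩, hxS⟩ y ⟨⟨hy₀, hy₁⟩, hyS⟩ a b ha hb hab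
  simp only [solidSimplexFace, solidSimplex, Set.mem_ofPred_eq, PiLp.add_apply, PiLp.smul_apply,
    smul_eq_mul, Finset.sum_add_distrib, ← Finset.mul_sum]
  refine ⟨⟨fun i ↦ by have := hx₀ i; have := hy₀ i; positivity, ?_⟩,
    fun i hi ↦ by simp [hxS i hi, hyS i hi]⟩
  calc a * ∑ i, x i + b * ∑ i, y i ≤ a * 1 + b * 1 := by gcongr
    _ = 1 := by rw [mul_one, mul_one, hab]

theorem convexHull_zero_union_single_eq_solidSimplexFace [DecidableEq ι] (S : Finset ι) :
    convexHull ℝ ({0} ∪ {x | ∃ i ∈ S, x = EuclideanSpace.single i (1 : ℝ)}) =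
      solidSimplexFace S := by
  refine subset_antisymm (convexHull_min ?_ (convex_solidSimplexFace S)) ?_
  · rintro _ (rfl | ⟨i, hi, rfl⟩)
    · simp [solidSimplexFace, solidSimplex]
    · refine ⟨⟨fun j ↦ ?_, by simp⟩, fun j hj ↦ ?_⟩
      · rw [PiLp.single_apply]; split_ifs <;> norm_num
      · rw [PiLp.single_apply, if_neg (ne_of_mem_of_not_mem hi hj).symm]
  · rintro x ⟨⟨hx₀, hx₁⟩, hxS⟩
    have hx : ∑ i ∈ S, x i • EuclideanSpace.single i (1 : ℝ) = x := by
      rw [Finset.sum_subset (Finset.subset_univ S) fun i _ hi ↦ by simp [hxS i hi]]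
      simpa using (EuclideanSpace.basisFun ι ℝ).sum_repr x
    rw [← hx]
    refine (convex_convexHull ℝ _).sum_mem_of_sum_le_one (subset_convexHull ℝ _ (Or.inl rfl))
      (fun i _ ↦ hx₀ i) ?_ fun i hi ↦ subset_convexHull ℝ _ (Or.inr ⟨i, hi, rfl⟩)
    exact (Finset.sum_le_sum_of_subset_of_nonneg (Finset.subset_univ S) fun i _ _ ↦ hx₀ i).trans hx₁

theorem mem_smul_solidSimplexFace_of_le {μ : ℝ} (hμ : 0 < μ) {S : Finset ι}
    {a x : EuclideanSpace ℝ ι} (ha : a ∈ solidSimplex ι) (hx₀ : ∀ i, 0 ≤ x i)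
    (hxS : ∀ i ∉ S, x i = 0) (hxa : ∀ i, x i ≤ μ * a i) : x ∈ μ • solidSimplexFace S := by
  rw [Set.mem_smul_set_iff_inv_smul_mem₀ hμ.ne']
  refine ⟨⟨fun i ↦ ?_, ?_⟩, fun i hi ↦ by simp [hxS i hi]⟩
  · simpa using mul_nonneg (inv_nonneg.2 hμ.le) (hx₀ i)
  · calc ∑ i, (μ⁻¹ • x) i ≤ ∑ i, a i := Finset.sum_le_sum fun i _ ↦ by
          simpa [inv_mul_le_iff₀ hμ] using hxa i
      _ ≤ 1 := ha.2

theorem exists_mem_smul_solidSimplexFace_add_smul_neg [DecidableEq ι] {μ ν : ℝ} (hμ : 0 < μ)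
    (hν : 0 < ν) {a b : EuclideanSpace ℝ ι} (ha : a ∈ solidSimplex ι) (hb : b ∈ -solidSimplex ι) :
    ∃ S : Finset ι, μ • a + ν • b ∈ μ • solidSimplexFace S + ν • -solidSimplexFace Sᶜ := by
  set y := μ • a + ν • b
  have hy (i : ι) : y i = μ * a i + ν * b i := rfl
  have ha₀ (i : ι) : 0 ≤ a i := ha.1 i
  have hb₀ (i : ι) : b i ≤ 0 := by simpa using hb.1 i
  have hpos (i : ι) : max (y i) 0 ≤ μ * a i :=
    max_le (by nlinarith [hy i, hb₀ i]) (mul_nonneg hμ.le (ha₀ i))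
  have hneg (i : ι) : max (-y i) 0 ≤ ν * (-b) i :=
    max_le (by simp only [PiLp.neg_apply]; nlinarith [hy i, ha₀ i])
      (by simpa using mul_nonneg hν.le (neg_nonneg.2 (hb₀ i)))
  refine ⟨Finset.univ.filter (0 < y ·), WithLp.toLp 2 fun i ↦ max (y i) 0, ?_,
    -WithLp.toLp 2 fun i ↦ max (-y i) 0, ?_, ?_⟩
  · refine mem_smul_solidSimplexFace_of_le hμ ha (fun i ↦ le_max_right _ _) (fun i hi ↦ ?_) hpos
    simpa using hi
  · rw [Set.smul_set_neg, Set.neg_mem_neg]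
    refine mem_smul_solidSimplexFace_of_le hν hb (fun i ↦ le_max_right _ _) (fun i hi ↦ ?_) hneg
    simpa using (Finset.mem_filter.1 (Finset.notMem_compl.1 hi)).2.le
  · ext i
    simp [← sub_eq_add_neg]

theorem smul_add_smul_neg_stdSimplex_eq_union_faces_general (n : ℕ)
    (Δ : Set (EuclideanSpace ℝ (Fin n)))
    (hΔ : Δ = {x | (∀ i, 0 ≤ x i) ∧ ∑ i, x i ≤ 1})
    (F : Finset (Fin n) → Set (EuclideanSpace ℝ (Fin n)))
    (hF : ∀ S, F S =
      convexHull ℝ ({0} ∪ {x | ∃ i ∈ S, x = EuclideanSpace.single i (1 : ℝ)}))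
    (μ ν : ℝ) (hμ : 0 < μ) (hν : 0 < ν) :
    μ • Δ + ν • (-Δ) = ⋃ S : Finset (Fin n), (μ • F S + ν • (-(F Sᶜ))) := by
  obtain rfl : Δ = solidSimplex (Fin n) := hΔ
  obtain rfl : F = solidSimplexFace :=
    funext fun S ↦ (hF S).trans (convexHull_zero_union_single_eq_solidSimplexFace S)
  refine subset_antisymm ?_ (Set.iUnion_subset fun S ↦ ?_)
  · rintro _ ⟨_, ⟨a, ha, rfl⟩, _, ⟨b, hb, rfl⟩, rfl⟩
    exact Set.mem_iUnion.2 (exists_mem_smul_solidSimplexFace_add_smul_neg hμ hν ha hb)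
  · exact Set.add_subset_add (Set.smul_set_mono (solidSimplexFace_subset S))
      (Set.smul_set_mono (Set.neg_subset_neg.2 (solidSimplexFace_subset Sᶜ)))

/-- For the standard simplex `Δ` in `ℝ^n` and the faces `F_S = conv({0} ∪ {e_i : i ∈ S})`,
`μΔ + ν(−Δ) = ⋃_{S ⊆ {1,…,n}} (μ F_S + ν(−F_{Sᶜ}))` for all positive reals `μ, ν`. -/
theorem smul_add_smul_neg_stdSimplex_eq_union_faces (n : ℕ) (hn : 1 ≤ n)
    (Δ : Set (EuclideanSpace ℝ (Fin n)))
    (hΔ : Δ = {x | (∀ i, 0 ≤ x i) ∧ ∑ i, x i ≤ 1})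
    (F : Finset (Fin n) → Set (EuclideanSpace ℝ (Fin n)))
    (hF : ∀ S, F S =
      convexHull ℝ ({0} ∪ {x | ∃ i ∈ S, x = EuclideanSpace.single i (1 : ℝ)}))
    (μ ν : ℝ) (hμ : 0 < μ) (hν : 0 < ν) :
    μ • Δ + ν • (-Δ) = ⋃ S : Finset (Fin n), (μ • F S + ν • (-(F Sᶜ))) :=
  smul_add_smul_neg_stdSimplex_eq_union_faces_general n Δ hΔ F hF μ ν hμ hν
end

section
/- Let n ≥ 1, let e_1,…,e_n be the standard basis of ℝ^n, and for S ⊆ {1,…,n} let F_S = conv({0} ∪ {e_i : i ∈ S}). For any positive reals μ, ν and any two distinct subsets S ≠ S' of {1,…,n}, the interiors of μ F_S + ν·(−F_{S^c}) and μ F_{S'} + ν·(−F_{S'^c}) are disjoint. -/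
open Pointwise MeasureTheory

lemma face_coord_nonneg (n : ℕ) (T : Finset (Fin n)) (i : Fin n) :
    convexHull ℝ ({0} ∪ {x : EuclideanSpace ℝ (Fin n) | ∃ j ∈ T, x = EuclideanSpace.single j (1 : ℝ)})
      ⊆ {x | 0 ≤ x i} := by
  apply convexHull_min
  · rintro x (rfl | ⟨j, hj, rfl⟩)
    · simp
    · simp [EuclideanSpace.single_apply]
      positivity
  · exact fun x hx y hy a b ha hb hab => by
      simp only [Set.mem_setOf_eq] at *
      have : ((a • x + b • y : EuclideanSpace ℝ (Fin n)) i) = a * x i + b * y i := by simp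
      rw [this]; positivity

lemma face_coord_zero (n : ℕ) (T : Finset (Fin n)) (i : Fin n) (hi : i ∉ T) :
    convexHull ℝ ({0} ∪ {x : EuclideanSpace ℝ (Fin n) | ∃ j ∈ T, x = EuclideanSpace.single j (1 : ℝ)})
      ⊆ {x | x i = 0} := by
  apply convexHull_min
  · rintro x (rfl | ⟨j, hj, rfl⟩)
    · simp
    · have : j ≠ i := fun h => hi (h ▸ hj)
      simp [EuclideanSpace.single_apply, this, Ne.symm this]
  · exact fun x hx y hy a b ha hb hab => by
      simp only [Set.mem_setOf_eq] at *
      have : ((a • x + b • y : EuclideanSpace ℝ (Fin n)) i) = a * x i + b * y i := by simp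
      rw [this, hx, hy]; ring

lemma piece_nonneg (n : ℕ) (F : Finset (Fin n) → Set (EuclideanSpace ℝ (Fin n)))
    (hF : ∀ S, F S =
      convexHull ℝ ({0} ∪ {x | ∃ i ∈ S, x = EuclideanSpace.single i (1 : ℝ)}))
    (μ ν : ℝ) (hμ : 0 < μ) (hν : 0 < ν) (S : Finset (Fin n)) (i : Fin n) (hi : i ∈ S) :
    μ • F S + ν • (-(F Sᶜ)) ⊆ {z | 0 ≤ z i} := by
  rintro z ⟨a, ⟨p, hp, rfl⟩, b, ⟨q, hq, rfl⟩, rfl⟩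
  rw [hF] at hp hq
  have hp' : 0 ≤ p i := face_coord_nonneg n S i hp
  rw [Set.mem_neg] at hq
  have hq' : (-q) i = 0 := face_coord_zero n Sᶜ i (by simpa using hi) hq
  have hq'' : q i = 0 := by
    have : (-q : EuclideanSpace ℝ (Fin n)) i = -(q i) := rfl
    linarith [this ▸ hq']
  have : ((μ • p + ν • q : EuclideanSpace ℝ (Fin n)) i) = μ * p i + ν * q i := by simp
  simp only [Set.mem_setOf_eq, this, hq'']
  positivity

lemma piece_nonpos (n : ℕ) (F : Finset (Fin n) → Set (EuclideanSpace ℝ (Fin n)))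
    (hF : ∀ S, F S =
      convexHull ℝ ({0} ∪ {x | ∃ i ∈ S, x = EuclideanSpace.single i (1 : ℝ)}))
    (μ ν : ℝ) (hμ : 0 < μ) (hν : 0 < ν) (S : Finset (Fin n)) (i : Fin n) (hi : i ∉ S) :
    μ • F S + ν • (-(F Sᶜ)) ⊆ {z | z i ≤ 0} := by
  rintro z ⟨a, ⟨p, hp, rfl⟩, b, ⟨q, hq, rfl⟩, rfl⟩
  rw [hF] at hp hq
  have hp' : p i = 0 := face_coord_zero n S i hi hp
  rw [Set.mem_neg] at hq
  have hq' : 0 ≤ (-q) i := face_coord_nonneg n Sᶜ i hq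
  have hq'' : q i ≤ 0 := by
    have : (-q : EuclideanSpace ℝ (Fin n)) i = -(q i) := rfl
    linarith [this ▸ hq']
  have : ((μ • p + ν • q : EuclideanSpace ℝ (Fin n)) i) = μ * p i + ν * q i := by simp
  simp only [Set.mem_setOf_eq, this, hp']
  nlinarith

lemma interior_neg_coord (n : ℕ) (B : Set (EuclideanSpace ℝ (Fin n))) (i : Fin n)
    (hB : B ⊆ {z | z i ≤ 0}) : interior B ⊆ {z | z i < 0} := by
  intro x hx
  have hx0 : x i ≤ 0 := hB (interior_subset hx)
  rcases lt_or_eq_of_le hx0 with h | h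
  · exact h
  · exfalso
    rcases Metric.isOpen_iff.1 isOpen_interior x hx with ⟨ε, hε, hball⟩
    set y : EuclideanSpace ℝ (Fin n) := x + (ε/2) • EuclideanSpace.single i 1 with hy
    have hyB : y ∈ B := by
      apply interior_subset; apply hball
      rw [Metric.mem_ball, dist_eq_norm]
      have : y - x = (ε/2) • EuclideanSpace.single i (1:ℝ) := by simp [hy]
      rw [this, norm_smul, EuclideanSpace.norm_single]
      rw [Real.norm_eq_abs, norm_one, mul_one, abs_of_pos (by linarith : (0:ℝ) < ε/2)]
      linarith
    have : y i = x i + ε/2 := by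
      simp [hy, EuclideanSpace.single_apply]
    have := hB hyB
    simp only [Set.mem_setOf_eq] at this
    rw [‹y i = x i + ε/2›] at this
    linarith

lemma interiors_disjoint_aux (n : ℕ)
    (F : Finset (Fin n) → Set (EuclideanSpace ℝ (Fin n)))
    (hF : ∀ S, F S =
      convexHull ℝ ({0} ∪ {x | ∃ i ∈ S, x = EuclideanSpace.single i (1 : ℝ)}))
    (μ ν : ℝ) (hμ : 0 < μ) (hν : 0 < ν)
    (S S' : Finset (Fin n)) (i : Fin n) (hiS : i ∈ S) (hiS' : i ∉ S') :
    Disjoint (interior (μ • F S + ν • (-(F Sᶜ))))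
      (interior (μ • F S' + ν • (-(F S'ᶜ)))) := by
  rw [Set.disjoint_left]
  intro x hx hx'
  have h1 : 0 ≤ x i := piece_nonneg n F hF μ ν hμ hν S i hiS (interior_subset hx)
  have h2 : x i < 0 := interior_neg_coord n _ i (piece_nonpos n F hF μ ν hμ hν S' i hiS') hx'
  linarith

/-- For the faces `F_S = conv({0} ∪ {e_i : i ∈ S})` of the standard simplex, and distinct
subsets `S ≠ S'`, the interiors of `μ F_S + ν(−F_{Sᶜ})` and `μ F_{S'} + ν(−F_{S'ᶜ})`
are disjoint. -/
theorem interiors_of_face_pieces_disjoint (n : ℕ) (hn : 1 ≤ n)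
    (F : Finset (Fin n) → Set (EuclideanSpace ℝ (Fin n)))
    (hF : ∀ S, F S =
      convexHull ℝ ({0} ∪ {x | ∃ i ∈ S, x = EuclideanSpace.single i (1 : ℝ)}))
    (μ ν : ℝ) (hμ : 0 < μ) (hν : 0 < ν)
    (S S' : Finset (Fin n)) (hSS' : S ≠ S') :
    Disjoint (interior (μ • F S + ν • (-(F Sᶜ))))
      (interior (μ • F S' + ν • (-(F S'ᶜ)))) := by
  have : ∃ i, (i ∈ S ∧ i ∉ S') ∨ (i ∈ S' ∧ i ∉ S) := by
    by_contra h
    push_neg at h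
    apply hSS'
    ext i
    rcases h i with ⟨h1, h2⟩
    constructor
    · intro hi; by_contra hi'; exact hi' (h1 hi)
    · intro hi; by_contra hi'; exact hi' (h2 hi)
  rcases this with ⟨i, ⟨h1, h2⟩ | ⟨h1, h2⟩⟩
  · exact interiors_disjoint_aux n F hF μ ν hμ hν S S' i h1 h2
  · exact (interiors_disjoint_aux n F hF μ ν hμ hν S' S i h1 h2).symm
end

section
/- Let K be a convex body in ℝ^n, let Λ be a full-rank lattice in ℝ^n with K + Λ = ℝ^n, and let u ∈ Λ \ {0}. Then det(Λ) ≤ vol(K) − (1/2)·vol(K ∩ (K + u)); equivalently, the covering density satisfies vol(K)/det(Λ) ≥ vol(K)/(vol(K) − (1/2)·vol(K ∩ (K+u))). -/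
/-!
For a point `x`, let `T` be the set of lattice vectors `g` with `g + x ∈ K` and `S ⊆ T` those with
`g + x ∈ K ∩ (K + u)`. The covering makes `T` nonempty, and `S - u ⊆ T`. A finite nonempty set is
never mapped into itself by a translation of infinite order (it would contain a whole orbit), so
`T` has an element outside `S` whenever `S ≠ ∅`; in all cases `2 + #S ≤ 2 #T`. Integrating these
counts over a fundamental domain `D` turns them into volumes:
`2 vol D + vol (K ∩ (K + u)) ≤ 2 vol K`, and `vol D = det Λ`.
-/

open Pointwise MeasureTheory
open scoped ENNReal

theorem Set.Finite.exists_add_notMem {G : Type*} [AddCancelMonoid G] {S : Set G}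
    (hS : S.Finite) (hne : S.Nonempty) {u : G} (hu : ¬IsOfFinAddOrder u) :
    ∃ v ∈ S, u + v ∉ S := by
  by_contra! hclosed
  obtain ⟨s, hs⟩ := hne
  have horbit (k : ℕ) : k • u + s ∈ S := by
    induction k with
    | zero => simpa using hs
    | succ k ih => simpa [succ_nsmul', add_assoc] using hclosed _ ih
  refine Set.infinite_range_of_injective ((add_left_injective s).comp
    (injective_nsmul_iff_not_isOfFinAddOrder.2 hu)) (hS.subset ?_)
  rintro _ ⟨k, rfl⟩
  exact horbit k

theorem Set.two_add_encard_le_two_mul_encard {G : Type*} [AddCancelMonoid G] {S T : Set G}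
    {u : G} (hu : ¬IsOfFinAddOrder u) (hST : S ⊆ T) (hshift : ∀ v ∈ S, u + v ∈ T)
    (hT : T.Nonempty) : 2 + S.encard ≤ 2 * T.encard := by
  rcases S.eq_empty_or_nonempty with rfl | hne
  · simpa using mul_le_mul_right (Set.one_le_encard_iff_nonempty.2 hT) 2
  rcases S.finite_or_infinite with hS | hS
  · obtain ⟨v, hvS, hvS'⟩ := hS.exists_add_notMem hne hu
    have hsucc : S.encard + 1 ≤ T.encard := by
      rw [← Set.encard_insert_of_notMem hvS']
      exact Set.encard_mono (Set.insert_subset (hshift v hvS) hST)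
    calc 2 + S.encard ≤ 2 * (S.encard + 1) := by
          rw [mul_add, mul_one, add_comm]; gcongr; exact le_mul_of_one_le_left' one_le_two
      _ ≤ 2 * T.encard := by gcongr
  · simp [(hS.mono hST).encard_eq]

theorem two_add_encard_vadd_mem_inter_le {G α : Type*} [AddGroup G] [AddAction G α]
    {K : Set α} {u : G} (hu : ¬IsOfFinAddOrder u) {x : α} (hx : ∃ g : G, g +ᵥ x ∈ K) :
    2 + {g : G | g +ᵥ x ∈ K ∩ (u +ᵥ K)}.encard ≤ 2 * {g : G | g +ᵥ x ∈ K}.encard := by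
  refine Set.two_add_encard_le_two_mul_encard (u := -u) (by rwa [isOfFinAddOrder_neg_iff])
    (fun g hg => hg.1) (fun g hg => ?_) hx
  simpa [add_vadd, Set.mem_vadd_set_iff_neg_vadd_mem] using hg.2

section FundamentalDomain

variable {G α : Type*} [AddGroup G] [AddAction G α] [MeasurableSpace G] [MeasurableSpace α]
  [MeasurableVAdd G α] {μ : Measure α} [VAddInvariantMeasure G α μ] {D : Set α}

theorem MeasureTheory.IsAddFundamentalDomain.measure_eq_setLIntegral_encard [Countable G]
    (hD : IsAddFundamentalDomain G D μ) {s : Set α} (hs : MeasurableSet s) :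
    μ s = ∫⁻ x in D, ({g : G | g +ᵥ x ∈ s}.encard : ℝ≥0∞) ∂μ := by
  have hcount (x : α) :
      ∑' g : G, s.indicator 1 (g +ᵥ x) = ({g : G | g +ᵥ x ∈ s}.encard : ℝ≥0∞) := by
    rw [← ENNReal.tsum_set_one, tsum_subtype _ fun _ => (1 : ℝ≥0∞)]
    exact tsum_congr fun g => by by_cases h : g +ᵥ x ∈ s <;> simp [h]
  calc μ s = ∫⁻ x, s.indicator 1 x ∂μ := (lintegral_indicator_one hs).symm
    _ = ∑' g : G, ∫⁻ x in D, s.indicator 1 (g +ᵥ x) ∂μ := hD.lintegral_eq_tsum'' _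
    _ = ∫⁻ x in D, ∑' g : G, s.indicator 1 (g +ᵥ x) ∂μ :=
      (lintegral_tsum fun g => ((measurable_one.indicator hs).comp
        (measurable_const_vadd g)).aemeasurable).symm
    _ = _ := by simp_rw [hcount]

theorem MeasureTheory.IsAddFundamentalDomain.two_mul_measure_add_measure_inter_vadd_le
    [Countable G] (hD : IsAddFundamentalDomain G D μ) {K : Set α} (hK : MeasurableSet K)
    (hcov : ∀ x : α, ∃ g : G, g +ᵥ x ∈ K) {u : G} (hu : ¬IsOfFinAddOrder u) :
    2 * μ D + μ (K ∩ (u +ᵥ K)) ≤ 2 * μ K := by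
  rw [hD.measure_eq_setLIntegral_encard hK,
    hD.measure_eq_setLIntegral_encard (hK.inter (hK.const_vadd u))]
  calc 2 * μ D + ∫⁻ x in D, ({g : G | g +ᵥ x ∈ K ∩ (u +ᵥ K)}.encard : ℝ≥0∞) ∂μ
      = ∫⁻ x in D, 2 + ({g : G | g +ᵥ x ∈ K ∩ (u +ᵥ K)}.encard : ℝ≥0∞) ∂μ := by
        rw [lintegral_add_left measurable_const, setLIntegral_const, mul_comm]
    _ ≤ ∫⁻ x in D, 2 * ({g : G | g +ᵥ x ∈ K}.encard : ℝ≥0∞) ∂μ := lintegral_mono fun x =>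
        by simpa using ENat.toENNReal_le.2 (two_add_encard_vadd_mem_inter_le hu (hcov x))
    _ = 2 * ∫⁻ x in D, ({g : G | g +ᵥ x ∈ K}.encard : ℝ≥0∞) ∂μ :=
        lintegral_const_mul' _ _ ENNReal.ofNat_ne_top

end FundamentalDomain

theorem ZSpan.volume_fundamentalDomain_euclideanSpace_s9 {ι : Type*} [Fintype ι] [DecidableEq ι]
    (b : Module.Basis ι ℝ (EuclideanSpace ℝ ι)) :
    volume (ZSpan.fundamentalDomain b) = ENNReal.ofReal |(Matrix.of fun i j => b i j).det| := by
  rw [ZSpan.measure_fundamentalDomain b volume (EuclideanSpace.basisFun ι ℝ).toBasis,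
    measure_congr (ZSpan.fundamentalDomain_ae_parallelepiped _ volume),
    OrthonormalBasis.coe_toBasis, OrthonormalBasis.volume_parallelepiped, mul_one,
    Module.Basis.det_apply, ← Matrix.det_transpose]
  rfl

theorem det_le_vol_sub_half_inter_general (n : ℕ)
    (K : Set (EuclideanSpace ℝ (Fin n)))
    (hKcpt : IsCompact K)
    (b : Module.Basis (Fin n) ℝ (EuclideanSpace ℝ (Fin n)))
    (hcov : K + (↑(Submodule.span ℤ (Set.range b)) : Set (EuclideanSpace ℝ (Fin n)))
      = Set.univ)
    (u : EuclideanSpace ℝ (Fin n)) (hu : u ∈ Submodule.span ℤ (Set.range b))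
    (hu0 : u ≠ 0) :
    ENNReal.ofReal |(Matrix.of fun i j => b i j).det| + volume (K ∩ (K + {u})) / 2
      ≤ volume K := by
  set Λ := (Submodule.span ℤ (Set.range b)).toAddSubgroup
  have : Countable Λ := inferInstanceAs (Countable (Submodule.span ℤ (Set.range b)))
  have : IsAddTorsionFree (EuclideanSpace ℝ (Fin n)) := .of_isTorsionFree ℝ _
  have hcov' (x : EuclideanSpace ℝ (Fin n)) : ∃ g : Λ, g +ᵥ x ∈ K := by
    obtain ⟨k, hk, l, hl, rfl⟩ := Set.mem_add.1 (hcov ▸ Set.mem_univ x)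
    refine ⟨-⟨l, hl⟩, ?_⟩
    rwa [AddSubgroup.vadd_def, vadd_eq_add, AddSubgroup.coe_neg, add_comm k l,
      neg_add_cancel_left]
  have hu' : ¬IsOfFinAddOrder (⟨u, hu⟩ : Λ) := fun h =>
    not_isOfFinAddOrder_of_isAddTorsionFree hu0 (AddSubmonoid.isOfFinAddOrder_coe.2 h)
  have hshift : K + {u} = (⟨u, hu⟩ : Λ) +ᵥ K := by
    rw [add_comm, Set.singleton_add]; rfl
  have hmain := (ZSpan.isAddFundamentalDomain' b volume).two_mul_measure_add_measure_inter_vadd_le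
    hKcpt.isClosed.measurableSet hcov' hu'
  rw [← ZSpan.volume_fundamentalDomain_euclideanSpace_s9, hshift]
  calc volume (ZSpan.fundamentalDomain b) + volume (K ∩ ((⟨u, hu⟩ : Λ) +ᵥ K)) / 2
      = (volume (ZSpan.fundamentalDomain b) * 2 + volume (K ∩ ((⟨u, hu⟩ : Λ) +ᵥ K))) / 2 := by
        rw [ENNReal.add_div, ENNReal.mul_div_cancel_right two_ne_zero ENNReal.ofNat_ne_top]
    _ ≤ volume K * 2 / 2 := by gcongr; rwa [mul_comm, mul_comm (volume K)]
    _ = volume K := ENNReal.mul_div_cancel_right two_ne_zero ENNReal.ofNat_ne_top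

/-- For a lattice covering `K + Λ = ℝ^n` by a convex body `K` and any nonzero lattice
vector `u`, `det(Λ) ≤ vol(K) − (1/2)·vol(K ∩ (K+u))`; equivalently
`det(Λ) + (1/2)·vol(K ∩ (K+u)) ≤ vol(K)`. -/
theorem det_le_vol_sub_half_inter (n : ℕ)
    (K : Set (EuclideanSpace ℝ (Fin n)))
    (hKcpt : IsCompact K) (hKconv : Convex ℝ K) (hKint : (interior K).Nonempty)
    (b : Module.Basis (Fin n) ℝ (EuclideanSpace ℝ (Fin n)))
    (hcov : K + (↑(Submodule.span ℤ (Set.range b)) : Set (EuclideanSpace ℝ (Fin n)))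
      = Set.univ)
    (u : EuclideanSpace ℝ (Fin n)) (hu : u ∈ Submodule.span ℤ (Set.range b))
    (hu0 : u ≠ 0) :
    ENNReal.ofReal |(Matrix.of fun i j => b i j).det| + volume (K ∩ (K + {u})) / 2
      ≤ volume K :=
  det_le_vol_sub_half_inter_general n K hKcpt b hcov u hu hu0
end
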